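/- arXiv:2109.05728 — 2 statements merged into one kernel-verified Lean document; each statement's English description precedes it below -/
import Mathlib

section
/- Let (M,d) be a spherically complete ultrametric space and let F : M → M be a nonexpansive map such that for every x ∈ M with x ≠ F(x) one has liminf_{n→∞} d(Fⁿ(x), Fⁿ⁺¹(x)) < d(x, F(x)). Then F has a fixed point in every F-invariant closed ball; that is, every closed ball B with F(B) ⊆ B contains a point p with F(p) = p. -/
open Metric

variable {M : Type*} [MetricSpace M]

/-- A subset `A` of a metric space is *spherically complete* (as a subspace) if every nested
decreasing sequence of closed balls of the subspace `A` has nonempty intersection. -/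
def SphericallyCompleteSet (A : Set M) : Prop :=
  ∀ (c : ℕ → M) (r : ℕ → ℝ), (∀ n, c n ∈ A) → (∀ n, 0 ≤ r n) →
    (∀ n, A ∩ closedBall (c (n + 1)) (r (n + 1)) ⊆ A ∩ closedBall (c n) (r n)) →
    (A ∩ ⋂ n, closedBall (c n) (r n)).Nonempty

/-- A metric space is *spherically complete* if every nested decreasing sequence of closed
balls has nonempty intersection. -/
def SphericallyCompleteSpace (M : Type*) [MetricSpace M] : Prop :=
  ∀ (c : ℕ → M) (r : ℕ → ℝ), (∀ n, 0 ≤ r n) →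
    (∀ n, closedBall (c (n + 1)) (r (n + 1)) ⊆ closedBall (c n) (r n)) →
    (⋂ n, closedBall (c n) (r n)).Nonempty

/-- `dist(A, B) = inf {d(a,b) : a ∈ A, b ∈ B}`. -/
noncomputable def setDist (A B : Set M) : ℝ :=
  sInf {t : ℝ | ∃ a ∈ A, ∃ b ∈ B, dist a b = t}

/-- A subset `A` is *proximinal* if every point of `M` has a best approximation in `A`. -/
def IsProximinal (A : Set M) : Prop :=
  ∀ x : M, ∃ a ∈ A, dist x a = infDist x A

/-- `A₀ = {x ∈ A : d(x,y) = dist(A,B) for some y ∈ B}`. -/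
noncomputable def proxA (A B : Set M) : Set M :=
  {x ∈ A | ∃ y ∈ B, dist x y = setDist A B}

/-- `B₀ = {y ∈ B : d(x,y) = dist(A,B) for some x ∈ A}`. -/
noncomputable def proxB (A B : Set M) : Set M :=
  {y ∈ B | ∃ x ∈ A, dist x y = setDist A B}

/-- The closed ball `B(c,r)`, `r > 0`, is a *minimal `F`-invariant ball* if `F(B) ⊆ B`
and `d(y, F(y)) = r` for each `y ∈ B`. -/
def IsMinimalInvariantBall (F : M → M) (c : M) (r : ℝ) : Prop :=
  0 < r ∧ Set.MapsTo F (closedBall c r) (closedBall c r) ∧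
    ∀ y ∈ closedBall c r, dist y (F y) = r

/-!
Write `ρ x = d(x, F x)` and `B_x` for the closed ball of radius `ρ x` about `x`. In an ultrametric
space a nonexpansive `F` maps `B_x` into itself, `ρ ≤ ρ x` on `B_x`, and `B_y ⊆ B_x` for `y ∈ B_x`.
Starting from `c`, pick `x_{k+1} ∈ B_{x_k}` with `ρ x_{k+1}` within `2⁻ᵏ` of `inf ρ` on `B_{x_k}`.
By spherical completeness these nested balls share a point `p`, and `ρ` attains its minimum on
`B_p` at `p`. The orbit of `p` stays in `B_p`, so `ρ` is constant along it, and the liminf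
hypothesis forces `ρ p = 0`.
-/

open Filter Set Topology

section Ultrametric

variable {X : Type*} [PseudoMetricSpace X] [IsUltrametricDist X] {F : X → X}

lemma mapsTo_closedBall_of_dist_apply_le (hF : ∀ x y, dist (F x) (F y) ≤ dist x y) {x : X}
    {r : ℝ} (hx : dist x (F x) ≤ r) : MapsTo F (closedBall x r) (closedBall x r) := by
  intro y hy
  rw [mem_closedBall] at hy ⊢
  calc dist (F y) x ≤ max (dist (F y) (F x)) (dist (F x) x) :=
        IsUltrametricDist.dist_triangle_max _ _ _
    _ ≤ r := max_le ((hF y x).trans hy) (by rwa [dist_comm])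

lemma dist_apply_le_of_mem_closedBall (hF : ∀ x y, dist (F x) (F y) ≤ dist x y) {x y : X}
    {r : ℝ} (hx : dist x (F x) ≤ r) (hy : y ∈ closedBall x r) : dist y (F y) ≤ r := by
  have hFy : dist (F y) x ≤ r := mapsTo_closedBall_of_dist_apply_le hF hx hy
  calc dist y (F y) ≤ max (dist y x) (dist x (F y)) := IsUltrametricDist.dist_triangle_max _ _ _
    _ ≤ r := max_le hy (by rwa [dist_comm])

lemma closedBall_dist_apply_subset (hF : ∀ x y, dist (F x) (F y) ≤ dist x y) {x y : X}
    (hy : y ∈ closedBall x (dist x (F x))) :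
    closedBall y (dist y (F y)) ⊆ closedBall x (dist x (F x)) :=
  (closedBall_subset_closedBall (dist_apply_le_of_mem_closedBall hF le_rfl hy)).trans
    (IsUltrametricDist.closedBall_eq_of_mem hy).ge

lemma dist_iterate_apply_eq_of_isMinOn (hF : ∀ x y, dist (F x) (F y) ≤ dist x y) {p : X}
    (hp : IsMinOn (fun x => dist x (F x)) (closedBall p (dist p (F p))) p) (n : ℕ) :
    dist (F^[n] p) (F^[n + 1] p) = dist p (F p) := by
  have hmem : F^[n] p ∈ closedBall p (dist p (F p)) :=
    (mapsTo_closedBall_of_dist_apply_le hF le_rfl).iterate n (mem_closedBall_self dist_nonneg)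
  rw [Function.iterate_succ_apply']
  exact le_antisymm (dist_apply_le_of_mem_closedBall hF le_rfl hmem) (hp hmem)

end Ultrametric

lemma exists_isMinOn_dist_apply [IsUltrametricDist M]
    (hM : SphericallyCompleteSpace M) {F : M → M} (hF : ∀ x y, dist (F x) (F y) ≤ dist x y)
    (c : M) : ∃ p ∈ closedBall c (dist c (F c)),
      IsMinOn (fun x => dist x (F x)) (closedBall p (dist p (F p))) p := by
  set ρ : M → ℝ := fun x => dist x (F x)
  have hρ_bdd (s : Set M) : BddBelow (ρ '' s) := by
    refine ⟨0, ?_⟩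
    rintro _ ⟨z, -, rfl⟩
    exact dist_nonneg
  have hstep (k : ℕ) (x : M) :
      ∃ y ∈ closedBall x (ρ x), ρ y < sInf (ρ '' closedBall x (ρ x)) + (1 / 2) ^ k := by
    obtain ⟨_, ⟨y, hy, rfl⟩, hlt⟩ := Real.lt_sInf_add_pos (s := ρ '' closedBall x (ρ x))
      ⟨ρ x, x, mem_closedBall_self dist_nonneg, rfl⟩ (by positivity : (0 : ℝ) < (1 / 2) ^ k)
    exact ⟨y, hy, hlt⟩
  choose next hnext_mem hnext_lt using hstep
  let x : ℕ → M := fun k => Nat.rec c (fun k xk => next k xk) k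
  have hx_succ (k : ℕ) : x (k + 1) = next k (x k) := rfl
  obtain ⟨p, hp⟩ := hM x (fun k => ρ (x k)) (fun _ => dist_nonneg)
    (fun k => hx_succ k ▸ closedBall_dist_apply_subset hF (hnext_mem k (x k)))
  rw [mem_iInter] at hp
  refine ⟨p, hp 0, fun q hq => ?_⟩
  show ρ p ≤ ρ q
  have hq_mem (k : ℕ) : q ∈ closedBall (x k) (ρ (x k)) := closedBall_dist_apply_subset hF (hp k) hq
  have hclose (k : ℕ) : ρ p ≤ ρ q + (1 / 2) ^ k :=
    calc ρ p ≤ ρ (x (k + 1)) := dist_apply_le_of_mem_closedBall hF le_rfl (hp (k + 1))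
      _ ≤ sInf (ρ '' closedBall (x k) (ρ (x k))) + (1 / 2) ^ k := (hnext_lt k (x k)).le
      _ ≤ ρ q + (1 / 2) ^ k := by gcongr; exact csInf_le (hρ_bdd _) ⟨q, hq_mem k, rfl⟩
  have hlim : Tendsto (fun k : ℕ => ρ q + (1 / 2) ^ k) atTop (𝓝 (ρ q)) := by
    simpa using tendsto_const_nhds.add (tendsto_pow_atTop_nhds_zero_of_lt_one
      (by norm_num : (0 : ℝ) ≤ 1 / 2) (by norm_num))
  exact ge_of_tendsto' hlim hclose

open Filter in
/-- In a spherically complete ultrametric space, a nonexpansive map `F` satisfying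
`liminf_{n→∞} d(Fⁿ x, Fⁿ⁺¹ x) < d(x, F x)` whenever `x ≠ F x` has a fixed point in
every `F`-invariant closed ball. -/
theorem fixedPoint_in_invariant_ball {M : Type*} [MetricSpace M] [IsUltrametricDist M]
    (hM : SphericallyCompleteSpace M) (F : M → M)
    (hF : ∀ x y : M, dist (F x) (F y) ≤ dist x y)
    (hliminf : ∀ x : M, x ≠ F x →
      liminf (fun n : ℕ => dist (F^[n] x) (F^[n + 1] x)) atTop < dist x (F x))
    (c : M) (r : ℝ) (hr : 0 ≤ r)
    (hinv : Set.MapsTo F (closedBall c r) (closedBall c r)) :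
    ∃ p ∈ closedBall c r, F p = p := by
  obtain ⟨p, hpc, hmin⟩ := exists_isMinOn_dist_apply hM hF c
  have hcr : dist c (F c) ≤ r := by
    simpa [dist_comm] using hinv (mem_closedBall_self hr)
  refine ⟨p, closedBall_subset_closedBall hcr hpc, ?_⟩
  by_contra hne
  have hlt := hliminf p (Ne.symm hne)
  simp only [dist_iterate_apply_eq_of_isMinOn hF hmin, liminf_const] at hlt
  exact hlt.false
end

section
/- Let (M,d) be a nonempty ultrametric space, let (A,B) be a proximinal pair of nonempty subsets of M with δ(B) ≤ dist(A,B), let b₀ ∈ B be arbitrary and write r = dist(A,B). Then A₀ = A ∩ S(b₀, r), where S(b₀,r) = {x ∈ M : d(b₀,x) = r} is the sphere with radius r and center b₀. -/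
open Metric

variable {M : Type*} [MetricSpace M]

theorem setDist_le_dist {A B : Set M} {a b : M} (ha : a ∈ A) (hb : b ∈ B) :
    setDist A B ≤ dist a b :=
  csInf_le ⟨0, fun _ ⟨_, _, _, _, h⟩ => h ▸ dist_nonneg⟩ ⟨a, ha, b, hb, rfl⟩

theorem dist_eq_setDist_of_mem_proxA [IsUltrametricDist M] {A B : Set M}
    (hδ : ∀ x ∈ B, ∀ y ∈ B, dist x y ≤ setDist A B) {x b : M} (hx : x ∈ proxA A B)
    (hb : b ∈ B) : dist b x = setDist A B := by
  obtain ⟨hxA, y, hy, hxy⟩ := hx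
  refine le_antisymm ?_ (dist_comm x b ▸ setDist_le_dist hxA hb)
  calc dist b x ≤ max (dist b y) (dist y x) := IsUltrametricDist.dist_triangle_max _ _ _
    _ ≤ setDist A B := max_le (hδ b hb y hy) (dist_comm x y ▸ hxy.le)

theorem proxA_eq_inter_sphere_general {M : Type*} [MetricSpace M] [IsUltrametricDist M]
    (A B : Set M)
    (hδ : ∀ x ∈ B, ∀ y ∈ B, dist x y ≤ setDist A B)
    (b₀ : M) (hb₀ : b₀ ∈ B) :
    proxA A B = A ∩ {x : M | dist b₀ x = setDist A B} := by
  ext x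
  constructor
  · intro hx
    exact ⟨hx.1, dist_eq_setDist_of_mem_proxA hδ hx hb₀⟩
  · rintro ⟨hxA, hx⟩
    exact ⟨hxA, b₀, hb₀, dist_comm x b₀ ▸ hx⟩

/-- **Lemma 2.3.** Under the assumptions of Lemma 1, for any `b₀ ∈ B` and `r = dist(A,B)`
we have `A₀ = A ∩ S(b₀, r)`, where `S(b₀,r)` is the sphere of radius `r` centered at `b₀`. -/
theorem proxA_eq_inter_sphere {M : Type*} [MetricSpace M] [IsUltrametricDist M]
    [Nonempty M] (A B : Set M) (hA : A.Nonempty) (hB : B.Nonempty)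
    (hAprox : IsProximinal A) (hBprox : IsProximinal B)
    (hδ : ∀ x ∈ B, ∀ y ∈ B, dist x y ≤ setDist A B)
    (b₀ : M) (hb₀ : b₀ ∈ B) :
    proxA A B = A ∩ {x : M | dist b₀ x = setDist A B} :=
  proxA_eq_inter_sphere_general A B hδ b₀ hb₀
end
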